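/- ∫_{1/2}^∞ τ⁷ (tanh(π √(τ² − 1/4)) − 1) dτ = −1943/215040. -/

import Mathlib

/-!
Substituting `τ = √(t² + 1/4)` turns the integral into
`∫₀^∞ t (t² + 1/4)³ (tanh (π t) - 1) dt`. Expanding `tanh y - 1 = -2 ∑ (-1)ⁿ e^{-2(n+1)y}` and
integrating termwise gives `∫₀^∞ t^m (tanh (a t) - 1) dt = -2 m! η(m+1) / (2a)^{m+1}`, where
`η(s) = (1 - 2^{1-s}) ζ(s)` is the alternating zeta function. Since `t (t² + 1/4)³` only involves
`t, t³, t⁵, t⁷`, everything reduces to `ζ(2), ζ(4), ζ(6), ζ(8)`, and the powers of `π` cancel.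
-/

open Real MeasureTheory Set
open scoped Nat

theorem hasSum_zeta_six : HasSum (fun n : ℕ => (1 : ℝ) / (n : ℝ) ^ 6) (π ^ 6 / 945) := by
  convert hasSum_zeta_nat (k := 3) three_ne_zero using 1
  rw [show bernoulli 6 = 1 / 42 by decide +kernel]
  simp [Nat.factorial]; ring

theorem hasSum_zeta_eight : HasSum (fun n : ℕ => (1 : ℝ) / (n : ℝ) ^ 8) (π ^ 8 / 9450) := by
  convert hasSum_zeta_nat (k := 4) four_ne_zero using 1
  rw [show bernoulli 8 = -1 / 30 by decide +kernel]
  simp [Nat.factorial]; ring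

theorem hasSum_alternating_one_div_pow {s : ℕ} (hs : s ≠ 0) {Z : ℝ}
    (hZ : HasSum (fun n : ℕ => 1 / (n : ℝ) ^ s) Z) :
    HasSum (fun n : ℕ => (-1) ^ n / ((n : ℝ) + 1) ^ s) ((1 - 2 / 2 ^ s) * Z) := by
  set b : ℕ → ℝ := fun n => 1 / ((n : ℝ) + 1) ^ s
  have hb : HasSum b Z := by
    simpa [b, zero_pow hs] using (hasSum_nat_add_iff' 1).mpr hZ
  have hodd : HasSum (fun k => b (2 * k + 1)) (Z / 2 ^ s) := by
    refine (hb.div_const (2 ^ s)).congr_fun fun k => ?_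
    simp only [b]; push_cast
    rw [show (2 * k + 1 + 1 : ℝ) = 2 * (k + 1) by ring, mul_pow, div_div, mul_comm]
  obtain ⟨E, heven⟩ : Summable fun k => b (2 * k) :=
    hb.summable.comp_injective (mul_right_injective₀ two_ne_zero)
  have hE : E + Z / 2 ^ s = Z := (heven.even_add_odd hodd).unique hb
  have := HasSum.even_add_odd (f := fun n : ℕ => (-1) ^ n / ((n : ℝ) + 1) ^ s)
    (heven.congr_fun fun k => by simp [b, pow_mul])
    (hodd.neg.congr_fun fun k => by simp [b, pow_succ, pow_mul, neg_div])
  convert this using 1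
  linear_combination (-1 : ℝ) * hE

theorem Real.tanh_sub_one (y : ℝ) :
    tanh y - 1 = -2 * exp (-(2 * y)) / (1 + exp (-(2 * y))) := by
  rw [tanh_eq_sinh_div_cosh, sinh_eq, cosh_eq, show -(2 * y) = -y + -y by ring, exp_add]
  have := exp_pos y
  have := exp_pos (-y)
  have : exp y * exp (-y) = 1 := by rw [← exp_add]; simp
  field_simp
  linear_combination 2 * exp (-y) * this

theorem Real.hasSum_tanh_sub_one {y : ℝ} (hy : 0 < y) :
    HasSum (fun n : ℕ => -2 * (-1) ^ n * exp (-(2 * (n + 1) * y))) (tanh y - 1) := by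
  set q := exp (-(2 * y))
  have hq : |-q| < 1 := by
    rw [abs_neg, abs_of_pos (exp_pos _), exp_lt_one_iff]; linarith
  have hterm (n : ℕ) : -2 * (-1) ^ n * exp (-(2 * (n + 1) * y)) = -2 * q * (-q) ^ n := by
    rw [neg_pow, show -(2 * (n + 1) * y) = n * -(2 * y) + -(2 * y) by ring, exp_add,
      exp_nat_mul]
    ring
  rw [funext hterm, tanh_sub_one, div_eq_mul_inv, ← sub_neg_eq_add 1]
  exact (hasSum_geometric_of_abs_lt_one hq).mul_left (-2 * q)

@[fun_prop]
theorem Real.continuous_tanh : Continuous tanh := by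
  simp only [funext tanh_eq_sinh_div_cosh]
  exact continuous_sinh.div continuous_cosh fun y => (cosh_pos y).ne'

theorem Real.abs_tanh_sub_one_le (y : ℝ) : |tanh y - 1| ≤ 2 * exp (-(2 * y)) := by
  rw [tanh_sub_one, neg_mul, neg_div, abs_neg, abs_of_pos (by positivity)]
  exact div_le_self (by positivity) (by linarith [exp_pos (-(2 * y))])

theorem integral_pow_mul_exp_neg_mul_Ioi (m : ℕ) {c : ℝ} (hc : 0 < c) :
    ∫ t in Ioi (0 : ℝ), t ^ m * exp (-(c * t)) = m ! / c ^ (m + 1) := by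
  have h := integral_rpow_mul_exp_neg_mul_Ioi (a := m + 1) (by positivity) hc
  rw [add_sub_cancel_right, Gamma_nat_eq_factorial, ← Nat.cast_succ, rpow_natCast,
    one_div_pow, one_div_mul_eq_div] at h
  rw [← h]
  exact setIntegral_congr_fun measurableSet_Ioi fun t _ => by rw [rpow_natCast]

theorem integrableOn_pow_mul_exp_neg_mul_Ioi (m : ℕ) {c : ℝ} (hc : 0 < c) :
    IntegrableOn (fun t => t ^ m * exp (-(c * t))) (Ioi 0) :=
  Integrable.of_integral_ne_zero <| by
    rw [integral_pow_mul_exp_neg_mul_Ioi m hc]; positivity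

theorem integrableOn_pow_mul_tanh_sub_one (m : ℕ) {a : ℝ} (ha : 0 < a) :
    IntegrableOn (fun t => t ^ m * (tanh (a * t) - 1)) (Ioi 0) := by
  refine ((integrableOn_pow_mul_exp_neg_mul_Ioi m (by positivity : 0 < 2 * a)).const_mul 2).mono'
    (by fun_prop) ?_
  refine (ae_restrict_iff' measurableSet_Ioi).mpr (ae_of_all _ fun t (ht : 0 < t) => ?_)
  calc ‖t ^ m * (tanh (a * t) - 1)‖ = t ^ m * |tanh (a * t) - 1| := by
        rw [norm_mul, norm_pow, norm_of_nonneg ht.le, norm_eq_abs]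
    _ ≤ t ^ m * (2 * exp (-(2 * (a * t)))) := by gcongr; exact abs_tanh_sub_one_le _
    _ = 2 * (t ^ m * exp (-(2 * a * t))) := by ring_nf

theorem integral_pow_mul_tanh_sub_one {m : ℕ} (hm : m ≠ 0) {a : ℝ} (ha : 0 < a) {E : ℝ}
    (hE : HasSum (fun n : ℕ => (-1) ^ n / ((n : ℝ) + 1) ^ (m + 1)) E) :
    ∫ t in Ioi 0, t ^ m * (tanh (a * t) - 1) = -2 * m ! * E / (2 * a) ^ (m + 1) := by
  set F : ℕ → ℝ → ℝ := fun n t => -2 * (-1) ^ n * (t ^ m * exp (-(2 * a * (n + 1) * t)))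
  have hc (n : ℕ) : 0 < 2 * a * (n + 1) := by positivity
  have hF_sum (t : ℝ) (ht : t ∈ Ioi 0) : HasSum (F · t) (t ^ m * (tanh (a * t) - 1)) := by
    refine ((hasSum_tanh_sub_one (mul_pos ha ht)).mul_left (t ^ m)).congr_fun fun n => ?_
    simp only [F]; ring_nf
  have hF_int (n : ℕ) : ∫ t in Ioi 0, F n t
      = -2 * m ! / (2 * a) ^ (m + 1) * ((-1) ^ n / ((n : ℝ) + 1) ^ (m + 1)) := by
    rw [integral_const_mul, integral_pow_mul_exp_neg_mul_Ioi m (hc n), mul_pow]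
    field_simp
  have hF_norm (n : ℕ) : ∫ t in Ioi 0, ‖F n t‖
      = 2 * m ! / (2 * a) ^ (m + 1) * (1 / ((n : ℝ) + 1) ^ (m + 1)) := by
    have hnorm : ∀ t ∈ Ioi (0 : ℝ),
        ‖F n t‖ = 2 * (t ^ m * exp (-(2 * a * (n + 1) * t))) :=
      fun t (ht : 0 < t) => by simp [F, abs_of_pos ht]
    rw [setIntegral_congr_fun measurableSet_Ioi hnorm, integral_const_mul,
      integral_pow_mul_exp_neg_mul_Ioi m (hc n), mul_pow]
    field_simp
  have hsummable : Summable fun n : ℕ => 1 / ((n : ℝ) + 1) ^ (m + 1) := by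
    exact_mod_cast (summable_nat_add_iff 1).mpr (Real.summable_one_div_nat_pow.mpr (by omega))
  have := hasSum_integral_of_summable_integral_norm
    (fun n => ((integrableOn_pow_mul_exp_neg_mul_Ioi m (hc n)).const_mul _))
    ((hsummable.mul_left _).congr fun n => (hF_norm n).symm)
  rw [setIntegral_congr_fun measurableSet_Ioi fun t ht => (hF_sum t ht).tsum_eq.symm,
    this.unique ((hE.mul_left _).congr_fun hF_int)]
  ring

theorem integral_Ioi_sqrt_mul_comp_sq_sub {c : ℝ} (hc : 0 ≤ c) (g : ℝ → ℝ) :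
    ∫ τ in Ioi √c, τ * g (τ ^ 2 - c) = ∫ t in Ioi 0, t * g (t ^ 2) := by
  set f : ℝ → ℝ := fun t => √(t ^ 2 + c)
  have hpos (t : ℝ) (ht : 0 < t) : 0 < t ^ 2 + c := by positivity
  have hf_sq (t : ℝ) : f t ^ 2 = t ^ 2 + c := sq_sqrt (by positivity)
  have hmono : StrictMonoOn f (Ici 0) := fun a ha b _ hab =>
    sqrt_lt_sqrt (by positivity) (by gcongr)
  have himage : f '' Ioi 0 = Ioi √c := by
    ext τ
    constructor
    · rintro ⟨t, ht, rfl⟩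
      simpa [f] using hmono self_mem_Ici (mem_Ici.mpr ht.le) ht
    · intro (hτ : √c < τ)
      have hτ0 : 0 < τ := (sqrt_nonneg c).trans_lt hτ
      have hcτ : c < τ ^ 2 := (sqrt_lt' hτ0).mp hτ
      refine ⟨√(τ ^ 2 - c), sqrt_pos.mpr (by linarith), ?_⟩
      simp only [f, sq_sqrt (by linarith : 0 ≤ τ ^ 2 - c), sub_add_cancel, sqrt_sq hτ0.le]
  have hderiv (t : ℝ) (ht : t ∈ Ioi 0) :
      HasDerivWithinAt f (t / f t) (Ioi 0) t := by
    have := ((hasDerivAt_pow 2 t).add_const c).sqrt (hpos t ht).ne'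
    refine this.hasDerivWithinAt.congr_deriv ?_
    field_simp [f]
    ring
  rw [← himage, integral_image_eq_integral_abs_deriv_smul measurableSet_Ioi hderiv
    (hmono.injOn.mono Ioi_subset_Ici_self)]
  refine setIntegral_congr_fun measurableSet_Ioi fun t (ht : 0 < t) => ?_
  have hft : 0 < f t := sqrt_pos.mpr (hpos t ht)
  rw [hf_sq, add_sub_cancel_right, smul_eq_mul, abs_of_pos (by positivity)]
  field_simp

theorem integral_tanh_seventh :
    ∫ τ in Set.Ioi (1/2 : ℝ),
      τ ^ 7 * (Real.tanh (π * Real.sqrt (τ ^ 2 - 1/4)) - 1) = -1943/215040 := by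
  set I : ℕ → ℝ := fun m => ∫ t in Ioi 0, t ^ m * (tanh (π * t) - 1)
  have hI (m : ℕ) : IntegrableOn (fun t => t ^ m * (tanh (π * t) - 1)) (Ioi 0) :=
    integrableOn_pow_mul_tanh_sub_one m pi_pos
  have moment {m : ℕ} (hm : m ≠ 0) {Z : ℝ}
      (hZ : HasSum (fun n : ℕ => 1 / (n : ℝ) ^ (m + 1)) Z) :
      I m = -2 * m ! * ((1 - 2 / 2 ^ (m + 1)) * Z) / (2 * π) ^ (m + 1) :=
    integral_pow_mul_tanh_sub_one hm pi_pos (hasSum_alternating_one_div_pow m.succ_ne_zero hZ)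
  calc ∫ τ in Ioi (1/2 : ℝ), τ ^ 7 * (tanh (π * √(τ ^ 2 - 1/4)) - 1)
      = ∫ τ in Ioi √(1/4),
          τ * ((τ ^ 2 - 1/4 + 1/4) ^ 3 * (tanh (π * √(τ ^ 2 - 1/4)) - 1)) := by
        rw [show √(1/4 : ℝ) = 1/2 by rw [sqrt_eq_iff_mul_self_eq] <;> norm_num]
        congr! 2 with τ
        ring
    _ = ∫ t in Ioi 0, t * ((t ^ 2 + 1/4) ^ 3 * (tanh (π * √(t ^ 2)) - 1)) :=
        integral_Ioi_sqrt_mul_comp_sq_sub (by norm_num)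
          fun u => (u + 1/4) ^ 3 * (tanh (π * √u) - 1)
    _ = ∫ t in Ioi 0, (t ^ 7 * (tanh (π * t) - 1) + 3/4 * (t ^ 5 * (tanh (π * t) - 1))
          + 3/16 * (t ^ 3 * (tanh (π * t) - 1)) + 1/64 * (t ^ 1 * (tanh (π * t) - 1))) :=
        setIntegral_congr_fun measurableSet_Ioi fun t (ht : 0 < t) => by
          rw [sqrt_sq ht.le]; ring
    _ = I 7 + 3/4 * I 5 + 3/16 * I 3 + 1/64 * I 1 := by
        have h5 := (hI 5).const_mul (3/4 : ℝ)
        have h3 := (hI 3).const_mul (3/16 : ℝ)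
        have h1 := (hI 1).const_mul (1/64 : ℝ)
        rw [integral_add (by exact ((hI 7).add h5).add h3) h1,
          integral_add (by exact (hI 7).add h5) h3,
          integral_add (hI 7) h5, integral_const_mul, integral_const_mul, integral_const_mul]
    _ = -1943/215040 := by
        rw [moment (by norm_num) hasSum_zeta_eight, moment (by norm_num) hasSum_zeta_six,
          moment (by norm_num) hasSum_zeta_four, moment (by norm_num) hasSum_zeta_two]
        field_simp
        norm_num [Nat.factorial]
        ring
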